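/- For all 0 ≤ t < T, m > 0, and p₁ ≤ p₂ ≤ P̄ one has 0 ≤ ū_BS(t, m, p₁) ≤ ū_BS(t, m, p₂). In other words, the Black–Scholes barrier-induced trading rate is nonnegative and is nonincreasing in the moneyness P̄ − p. -/

import Mathlib

open MeasureTheory intervalIntegral

noncomputable section

/-- `G(t) = β cosh(β t) + λ⁻¹ Γ sinh(β t)` with `β = √(γ/λ)`. -/
def Gfun (lam gam Gam : ℝ) (t : ℝ) : ℝ :=
  Real.sqrt (gam / lam) * Real.cosh (Real.sqrt (gam / lam) * t)
    + lam⁻¹ * Gam * Real.sinh (Real.sqrt (gam / lam) * t)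

/-- The standard normal density `φ(x) = exp(−x²/2)/√(2π)`. -/
def stdNormalPdf (x : ℝ) : ℝ := Real.exp (-x ^ 2 / 2) / Real.sqrt (2 * Real.pi)

/-- The standard normal cumulative distribution function `Φ(x) = ∫_{−∞}^x φ(y) dy`. -/
def stdNormalCdf (x : ℝ) : ℝ := ∫ y in Set.Iic x, stdNormalPdf y

/-- `f(u, m, p) = σ√u/2 − (1/(σ√u)) log((P̄−p)/m + 1)`. -/
def fBS (σ Pbar : ℝ) (u m p : ℝ) : ℝ :=
  σ * Real.sqrt u / 2 - (1 / (σ * Real.sqrt u)) * Real.log ((Pbar - p) / m + 1)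

/-- The Black–Scholes barrier-induced trading rate
`ū_BS(t,m,p) = (m/(2λ)) ∫_t^T (G(T−s)/G(T−t)) [(σ/√(s−t)) φ(f(s−t,m,p)) + (σ²/2) Φ(f(s−t,m,p))] ds`. -/
def uBS (T lam gam Gam σ Pbar : ℝ) (t m p : ℝ) : ℝ :=
  (m / (2 * lam)) * ∫ s in t..T,
    (Gfun lam gam Gam (T - s) / Gfun lam gam Gam (T - t))
      * ((σ / Real.sqrt (s - t)) * stdNormalPdf (fBS σ Pbar (s - t) m p)
          + (σ ^ 2 / 2) * stdNormalCdf (fBS σ Pbar (s - t) m p))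

open Real Set

/-!
Since `φ' = -xφ`, the map `L ↦ c φ(a - bL) + c a Φ(a - bL)` has derivative `-c b² L φ(a - bL)`,
so it is antitone on `L ≥ 0`. With `c = σ/√u`, `a = σ√u/2`, `b = 1/(σ√u)` it is the bracket of
`ū_BS` as a function of the log-moneyness `L = log((P̄ - p)/m + 1) ≥ 0`, which decreases in `p`.
The weight `G(T - s)/G(T - t)` lies in `[0, 1]` since `G` is nonnegative and nondecreasing on
`[0, ∞)`, and the bracket is at most the integrable `σ/√(s - t) + σ²/2`, so the integrals compare.
-/

lemma stdNormalPdf_eq_gaussianPDFReal : stdNormalPdf = ProbabilityTheory.gaussianPDFReal 0 1 := by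
  funext x
  simp [stdNormalPdf, ProbabilityTheory.gaussianPDFReal, div_eq_inv_mul]

lemma stdNormalPdf_pos (x : ℝ) : 0 < stdNormalPdf x := by
  unfold stdNormalPdf
  positivity

lemma stdNormalPdf_le_one (x : ℝ) : stdNormalPdf x ≤ 1 := by
  refine div_le_one_of_le₀ ?_ (sqrt_nonneg _)
  calc rexp (-x ^ 2 / 2) ≤ 1 := exp_le_one_iff.2 (by nlinarith [sq_nonneg x])
    _ ≤ √(2 * π) := one_le_sqrt.2 (by linarith [pi_gt_three])

lemma continuous_stdNormalPdf : Continuous stdNormalPdf := by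
  unfold stdNormalPdf
  fun_prop

lemma integrable_stdNormalPdf : Integrable stdNormalPdf :=
  stdNormalPdf_eq_gaussianPDFReal ▸ ProbabilityTheory.integrable_gaussianPDFReal 0 1

lemma integral_stdNormalPdf : ∫ x, stdNormalPdf x = 1 :=
  stdNormalPdf_eq_gaussianPDFReal ▸ ProbabilityTheory.integral_gaussianPDFReal_eq_one 0 one_ne_zero

lemma hasDerivAt_stdNormalPdf (x : ℝ) : HasDerivAt stdNormalPdf (-x * stdNormalPdf x) x := by
  have hexponent : HasDerivAt (fun y : ℝ => -y ^ 2 / 2) (-x) x :=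
    (((hasDerivAt_id x).pow 2).neg.div_const 2).congr_deriv
      (by simp only [id, Nat.cast_ofNat]; ring)
  exact (hexponent.exp.div_const √(2 * π)).congr_deriv (by rw [stdNormalPdf]; ring)

lemma stdNormalCdf_nonneg (x : ℝ) : 0 ≤ stdNormalCdf x :=
  setIntegral_nonneg measurableSet_Iic fun y _ => (stdNormalPdf_pos y).le

lemma stdNormalCdf_le_one (x : ℝ) : stdNormalCdf x ≤ 1 :=
  integral_stdNormalPdf ▸ setIntegral_le_integral integrable_stdNormalPdf
    (Filter.Eventually.of_forall fun y => (stdNormalPdf_pos y).le)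

lemma hasDerivAt_stdNormalCdf (x : ℝ) : HasDerivAt stdNormalCdf (stdNormalPdf x) x := by
  have hΦ : stdNormalCdf = fun u => stdNormalCdf 0 + ∫ y in (0 : ℝ)..u, stdNormalPdf y := by
    funext u
    rw [← intervalIntegral.integral_Iic_sub_Iic integrable_stdNormalPdf.integrableOn
      integrable_stdNormalPdf.integrableOn, stdNormalCdf, stdNormalCdf, add_sub_cancel]
  rw [hΦ]
  exact (intervalIntegral.integral_hasDerivAt_right integrable_stdNormalPdf.intervalIntegrable
    (continuous_stdNormalPdf.stronglyMeasurableAtFilter _ _)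
    continuous_stdNormalPdf.continuousAt).const_add _

lemma continuous_stdNormalCdf : Continuous stdNormalCdf :=
  continuous_iff_continuousAt.2 fun x => (hasDerivAt_stdNormalCdf x).continuousAt

lemma hasDerivAt_mul_stdNormalPdf_add_mul_stdNormalCdf (a b c L : ℝ) :
    HasDerivAt (fun L => c * stdNormalPdf (a - b * L) + c * a * stdNormalCdf (a - b * L))
      (-(c * b ^ 2 * L * stdNormalPdf (a - b * L))) L := by
  have hin : HasDerivAt (fun L : ℝ => a - b * L) (-b) L := by
    simpa using ((hasDerivAt_id L).const_mul b).const_sub a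
  have hpdf := ((hasDerivAt_stdNormalPdf _).comp L hin).const_mul c
  have hcdf := ((hasDerivAt_stdNormalCdf _).comp L hin).const_mul (c * a)
  exact (hpdf.add hcdf).congr_deriv (by ring)

lemma antitoneOn_mul_stdNormalPdf_add_mul_stdNormalCdf {c : ℝ} (a b : ℝ) (hc : 0 ≤ c) :
    AntitoneOn (fun L => c * stdNormalPdf (a - b * L) + c * a * stdNormalCdf (a - b * L))
      (Ici 0) := by
  refine antitoneOn_of_hasDerivWithinAt_nonpos (convex_Ici 0)
    (fun L _ => (hasDerivAt_mul_stdNormalPdf_add_mul_stdNormalCdf a b c L).continuousAt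
      |>.continuousWithinAt)
    (fun L _ => (hasDerivAt_mul_stdNormalPdf_add_mul_stdNormalCdf a b c L).hasDerivWithinAt)
    fun L hL => ?_
  rw [interior_Ici] at hL
  have := stdNormalPdf_pos (a - b * L)
  have : 0 ≤ c * b ^ 2 * L := by have := hL.out.le; positivity
  exact neg_nonpos.2 (by positivity)

section Weight

variable {lam gam Gam : ℝ}

lemma Gfun_nonneg (hlam : 0 ≤ lam) (hGam : 0 ≤ Gam) {x : ℝ} (hx : 0 ≤ x) :
    0 ≤ Gfun lam gam Gam x := by
  have := sinh_nonneg_iff.2 (mul_nonneg (sqrt_nonneg (gam / lam)) hx)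
  unfold Gfun
  positivity

lemma monotoneOn_Gfun (hlam : 0 ≤ lam) (hGam : 0 ≤ Gam) :
    MonotoneOn (Gfun lam gam Gam) (Ici 0) := by
  intro x hx y hy hxy
  have hβ := sqrt_nonneg (gam / lam)
  have hcosh : cosh (√(gam / lam) * x) ≤ cosh (√(gam / lam) * y) := by
    rw [cosh_le_cosh, abs_of_nonneg (by have := hx.out; positivity),
      abs_of_nonneg (by have := hy.out; positivity)]
    exact mul_le_mul_of_nonneg_left hxy hβ
  have hsinh := sinh_le_sinh.2 (mul_le_mul_of_nonneg_left hxy hβ)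
  unfold Gfun
  gcongr

lemma Gfun_div_Gfun_mem_Icc (hlam : 0 ≤ lam) (hGam : 0 ≤ Gam) {T t s : ℝ} (hts : t ≤ s)
    (hsT : s ≤ T) : Gfun lam gam Gam (T - s) / Gfun lam gam Gam (T - t) ∈ Icc 0 1 :=
  ⟨div_nonneg (Gfun_nonneg hlam hGam (by linarith)) (Gfun_nonneg hlam hGam (by linarith)),
    div_le_one_of_le₀ (monotoneOn_Gfun hlam hGam (sub_nonneg.2 hsT) (sub_nonneg.2 (hts.trans hsT))
      (by linarith)) (Gfun_nonneg hlam hGam (by linarith))⟩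

end Weight

lemma intervalIntegrable_inv_sqrt_sub {a b : ℝ} (hab : a ≤ b) :
    IntervalIntegrable (fun s => (√(s - a))⁻¹) volume a b := by
  have hrpow := (intervalIntegral.intervalIntegrable_rpow' (r := -(1 / 2)) (by norm_num)
    (a := 0) (b := b - a)).comp_sub_right a
  rw [zero_add, sub_add_cancel] at hrpow
  refine (intervalIntegrable_congr fun s hs => ?_).1 hrpow
  rw [uIoc_of_le hab] at hs
  simp only [rpow_neg (sub_nonneg.2 hs.1.le), sqrt_eq_rpow]

section Bracket

variable {σ Pbar u m : ℝ}

def bsBracket (σ Pbar u m p : ℝ) : ℝ :=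
  (σ / √u) * stdNormalPdf (fBS σ Pbar u m p) + (σ ^ 2 / 2) * stdNormalCdf (fBS σ Pbar u m p)

lemma uBS_eq_integral_bsBracket (T lam gam Gam t p : ℝ) :
    uBS T lam gam Gam σ Pbar t m p = (m / (2 * lam)) * ∫ s in t..T,
      Gfun lam gam Gam (T - s) / Gfun lam gam Gam (T - t) * bsBracket σ Pbar (s - t) m p :=
  rfl

lemma bsBracket_nonneg (hσ : 0 ≤ σ) (p : ℝ) : 0 ≤ bsBracket σ Pbar u m p := by
  have := stdNormalPdf_pos (fBS σ Pbar u m p)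
  have := stdNormalCdf_nonneg (fBS σ Pbar u m p)
  unfold bsBracket
  positivity

lemma bsBracket_le (hσ : 0 ≤ σ) (p : ℝ) : bsBracket σ Pbar u m p ≤ σ / √u + σ ^ 2 / 2 := by
  have hpdf := stdNormalPdf_le_one (fBS σ Pbar u m p)
  have hcdf := stdNormalCdf_le_one (fBS σ Pbar u m p)
  have : 0 ≤ σ / √u := by positivity
  unfold bsBracket
  calc _ ≤ σ / √u * 1 + σ ^ 2 / 2 * 1 := by gcongr
    _ = _ := by ring

lemma measurable_bsBracket_sub (t p : ℝ) : Measurable fun s => bsBracket σ Pbar (s - t) m p := by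
  have := continuous_stdNormalCdf.measurable
  have := continuous_stdNormalPdf.measurable
  unfold bsBracket fBS
  fun_prop

lemma monotoneOn_bsBracket (hσ : 0 ≤ σ) (hu : 0 < u) (hm : 0 ≤ m) :
    MonotoneOn (bsBracket σ Pbar u m) (Iic Pbar) := by
  have hmoney : ∀ p ∈ Iic Pbar, 1 ≤ (Pbar - p) / m + 1 := fun p hp =>
    le_add_of_nonneg_left (div_nonneg (sub_nonneg.2 hp) hm)
  have hbracket : ∀ p, bsBracket σ Pbar u m p =
      σ / √u * stdNormalPdf (σ * √u / 2 - 1 / (σ * √u) * log ((Pbar - p) / m + 1))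
        + σ / √u * (σ * √u / 2)
          * stdNormalCdf (σ * √u / 2 - 1 / (σ * √u) * log ((Pbar - p) / m + 1)) := by
    intro p
    have : √u ≠ 0 := (sqrt_pos.2 hu).ne'
    rw [bsBracket, fBS]
    field_simp
  intro p hp q hq hpq
  rw [hbracket, hbracket]
  refine antitoneOn_mul_stdNormalPdf_add_mul_stdNormalCdf _ _ (by positivity)
    (log_nonneg (hmoney q hq)) (log_nonneg (hmoney p hp))
    (log_le_log (one_pos.trans_le (hmoney q hq)) ?_)
  gcongr

end Bracket

lemma intervalIntegrable_Gfun_div_mul_bsBracket {T lam gam Gam σ Pbar t m : ℝ} (hlam : 0 ≤ lam)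
    (hGam : 0 ≤ Gam) (hσ : 0 ≤ σ) (htT : t ≤ T) (p : ℝ) :
    IntervalIntegrable (fun s => Gfun lam gam Gam (T - s) / Gfun lam gam Gam (T - t)
      * bsBracket σ Pbar (s - t) m p) volume t T := by
  have hbound : IntervalIntegrable (fun s => σ / √(s - t) + σ ^ 2 / 2) volume t T := by
    simp only [div_eq_mul_inv]
    exact ((intervalIntegrable_inv_sqrt_sub htT).const_mul σ).add intervalIntegrable_const
  have hGfun : Continuous (Gfun lam gam Gam) := by unfold Gfun; fun_prop
  refine hbound.mono_fun' ?_ ?_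
  · exact (((hGfun.comp (continuous_sub_left T)).measurable.div_const _).mul
      (measurable_bsBracket_sub t p)).aestronglyMeasurable
  · rw [uIoc_of_le htT]
    refine (ae_restrict_iff' measurableSet_Ioc).2 (Filter.Eventually.of_forall fun s hs => ?_)
    obtain ⟨hw0, hw1⟩ := Gfun_div_Gfun_mem_Icc (gam := gam) hlam hGam hs.1.le hs.2
    have hB := bsBracket_nonneg (Pbar := Pbar) (u := s - t) (m := m) hσ p
    dsimp only
    rw [Real.norm_of_nonneg (mul_nonneg hw0 hB)]
    exact (mul_le_of_le_one_left hB hw1).trans (bsBracket_le hσ p)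

theorem uBS_nonneg_monotone_in_price_general
    (T lam gam Gam σ Pbar : ℝ) (hlam : 0 < lam) (hGam : 0 < Gam)
    (hσ : 0 < σ) :
    ∀ t, 0 ≤ t → t < T → ∀ m, 0 < m → ∀ p₁ p₂, p₁ ≤ p₂ → p₂ ≤ Pbar →
      0 ≤ uBS T lam gam Gam σ Pbar t m p₁
      ∧ uBS T lam gam Gam σ Pbar t m p₁ ≤ uBS T lam gam Gam σ Pbar t m p₂ := by
  intro t _ htT m hm p₁ p₂ hp hp₂
  have hweight : ∀ s ∈ Icc t T, Gfun lam gam Gam (T - s) / Gfun lam gam Gam (T - t) ∈ Icc 0 1 :=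
    fun s hs => Gfun_div_Gfun_mem_Icc hlam.le hGam.le hs.1 hs.2
  have hint := intervalIntegrable_Gfun_div_mul_bsBracket (gam := gam) (Pbar := Pbar) (m := m)
    hlam.le hGam.le hσ.le htT.le
  rw [uBS_eq_integral_bsBracket, uBS_eq_integral_bsBracket]
  constructor
  · refine mul_nonneg (by positivity) (intervalIntegral.integral_nonneg htT.le fun s hs => ?_)
    exact mul_nonneg (hweight s hs).1 (bsBracket_nonneg hσ.le p₁)
  · refine mul_le_mul_of_nonneg_left ?_ (by positivity)
    refine intervalIntegral.integral_mono_on_of_le_Ioo htT.le (hint p₁) (hint p₂) fun s hs => ?_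
    exact mul_le_mul_of_nonneg_left
      (monotoneOn_bsBracket hσ.le (sub_pos.2 hs.1) hm.le (hp.trans hp₂) hp₂ hp)
      (hweight s (Ioo_subset_Icc_self hs)).1

/-- for `0 ≤ t < T`, `m > 0`, and `p₁ ≤ p₂ ≤ P̄`,
`0 ≤ ū_BS(t, m, p₁) ≤ ū_BS(t, m, p₂)`: the Black–Scholes barrier-induced rate is
nonnegative and nonincreasing in the moneyness `P̄ − p`. -/
theorem uBS_nonneg_monotone_in_price
    (T lam gam Gam σ Pbar : ℝ) (hlam : 0 < lam) (hgam : 0 < gam) (hGam : 0 < Gam)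
    (hσ : 0 < σ) :
    ∀ t, 0 ≤ t → t < T → ∀ m, 0 < m → ∀ p₁ p₂, p₁ ≤ p₂ → p₂ ≤ Pbar →
      0 ≤ uBS T lam gam Gam σ Pbar t m p₁
      ∧ uBS T lam gam Gam σ Pbar t m p₁ ≤ uBS T lam gam Gam σ Pbar t m p₂ :=
  uBS_nonneg_monotone_in_price_general T lam gam Gam σ Pbar hlam hGam hσ

end
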